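/- arXiv:2009.03209 — 4 statements merged into one kernel-verified Lean document; each statement's English description precedes it below -/
import Mathlib

section
/- Discrete Gronwall lemma: let {y_n}, {f_n}, {g_n} be sequences of non-negative reals such that y_n ≤ f_n + Σ_{0 ≤ k < n} g_k y_k for all n ≥ 0. Then y_n ≤ f_n + Σ_{0 ≤ k < n} f_k g_k exp( Σ_{k < j < n} g_j ) for all n ≥ 0. -/
open Finset

lemma expAux (g : ℕ → ℝ) (hg : ∀ n, 0 ≤ g n) (i : ℕ) : ∀ n,
    1 + ∑ k ∈ Ioo i n, g k * Real.exp (∑ j ∈ Ioo i k, g j)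
      ≤ Real.exp (∑ j ∈ Ioo i n, g j) := by
  intro n
  induction n with
  | zero => simp
  | succ n ih =>
    rcases le_or_gt n i with hle | hlt
    · have he : Ioo i (n+1) = (∅ : Finset ℕ) := by
        ext x; simp; omega
      simp [he]
    · have hins : Ioo i (n+1) = insert n (Ioo i n) := by
        ext x; simp; omega
      rw [hins, sum_insert (by simp), sum_insert (by simp)]
      have hS : (0:ℝ) < Real.exp (∑ j ∈ Ioo i n, g j) := Real.exp_pos _
      have hexp : g n + 1 ≤ Real.exp (g n) := Real.add_one_le_exp (g n)
      rw [Real.exp_add]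
      nlinarith [Real.exp_pos (g n)]

lemma swapAux (A : ℕ → ℕ → ℝ) : ∀ n, ∑ k ∈ range n, ∑ i ∈ range k, A i k
    = ∑ i ∈ range n, ∑ k ∈ Ioo i n, A i k := by
  intro n
  induction n with
  | zero => simp
  | succ n ih =>
    rw [sum_range_succ, ih, sum_range_succ (fun i => ∑ k ∈ Ioo i (n+1), A i k)]
    have h1 : Ioo n (n+1) = (∅ : Finset ℕ) := by ext x; simp
    rw [h1, sum_empty, add_zero, ← sum_add_distrib]
    apply sum_congr rfl
    intro i hi
    have hi' : i < n := mem_range.mp hi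
    have : Ioo i (n+1) = insert n (Ioo i n) := by
      ext x; simp; omega
    rw [this, sum_insert (by simp)]
    ring

/-- Discrete Gronwall lemma: if `{y_n}, {f_n}, {g_n}` are non-negative
real sequences with `y_n ≤ f_n + Σ_{k<n} g_k y_k` for all `n`, then
`y_n ≤ f_n + Σ_{k<n} f_k g_k exp(Σ_{k<j<n} g_j)` for all `n`. -/
theorem stmt6 (y f g : ℕ → ℝ)
    (hy : ∀ n, 0 ≤ y n) (hf : ∀ n, 0 ≤ f n) (hg : ∀ n, 0 ≤ g n)
    (h : ∀ n, y n ≤ f n + ∑ k ∈ Finset.range n, g k * y k) :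
    ∀ n, y n ≤ f n + ∑ k ∈ Finset.range n,
      f k * g k * Real.exp (∑ j ∈ Finset.Ioo k n, g j) := by
  intro n
  induction n using Nat.strong_induction_on with
  | _ n ih =>
  calc y n ≤ f n + ∑ k ∈ range n, g k * y k := h n
    _ ≤ f n + ∑ k ∈ range n, g k *
          (f k + ∑ i ∈ range k, f i * g i * Real.exp (∑ j ∈ Ioo i k, g j)) := by
        gcongr with k hk
        · exact hg k
        · exact ih k (mem_range.mp hk)
    _ = f n + (∑ k ∈ range n, g k * f k
          + ∑ k ∈ range n, ∑ i ∈ range k,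
              g k * (f i * g i * Real.exp (∑ j ∈ Ioo i k, g j))) := by
        rw [← sum_add_distrib]
        congr 1
        apply sum_congr rfl
        intro k _
        rw [mul_add, Finset.mul_sum]
    _ = f n + ∑ i ∈ range n, f i * g i *
          (1 + ∑ k ∈ Ioo i n, g k * Real.exp (∑ j ∈ Ioo i k, g j)) := by
        rw [swapAux (fun i k => g k * (f i * g i * Real.exp (∑ j ∈ Ioo i k, g j))),
          ← sum_add_distrib]
        congr 1
        apply sum_congr rfl
        intro i _
        rw [mul_add, mul_one, Finset.mul_sum]
        congr 1
        · ring
        · apply sum_congr rfl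
          intro k _
          ring
    _ ≤ f n + ∑ i ∈ range n, f i * g i * Real.exp (∑ j ∈ Ioo i n, g j) := by
        gcongr with i _
        · exact mul_nonneg (hf i) (hg i)
        · exact expAux g hg i n
end

section
/- ODE-constraint lower barrier (discrete-in-time/weak form): let v ∈ H¹(0,T; L²(Ω)) satisfy ∂_t v = Φ_τ(u, v) a.e. in Ω×(0,T), where Φ_τ(u,v) = (1/τ)(-[u-ρ^{(d)}(v)]_+ - [u-ρ^{(i)}(v)]_-), ρ^{(i)}, ρ^{(d)} are continuous and non-increasing, ρ^{(i)}(V_m) = ρ^{(d)}(V_m) = U_M, u ≤ U_M a.e., and v(·,0) ≥ V_m a.e. Then v(·,t) ≥ V_m a.e. in Ω for every t ∈ [0,T]. -/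
open MeasureTheory Set

/-- Pointwise barrier lemma. -/
lemma stmt11_aux (T τ Vm UM : ℝ) (hτ : 0 < τ)
    (ρi ρd : ℝ → ℝ)
    (hai : Antitone ρi)
    (hiVm : ρi Vm = UM)
    (hle : ∀ w, ρi w ≤ ρd w)
    (u f : ℝ → ℝ)
    (hode : ∀ t ∈ Set.Icc (0:ℝ) T,
      HasDerivAt f ((1/τ) * (-(max (u t - ρd (f t)) 0) - min (u t - ρi (f t)) 0)) t)
    (hu : ∀ t ∈ Set.Icc (0:ℝ) T, u t ≤ UM)
    (hv0 : Vm ≤ f 0) :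
    ∀ t ∈ Set.Icc (0:ℝ) T, Vm ≤ f t := by
  intro t ht
  by_contra hlt
  push_neg at hlt
  -- f is continuous on [0,T]
  have hcont : ContinuousOn f (Set.Icc 0 T) := fun r hr =>
    ((hode r hr).continuousAt).continuousWithinAt
  set S : Set ℝ := {r ∈ Set.Icc 0 t | Vm ≤ f r} with hS
  have hsubT : Set.Icc (0:ℝ) t ⊆ Set.Icc 0 T := Set.Icc_subset_Icc le_rfl ht.2
  have hScl : IsClosed S := by
    have : S = Set.Icc 0 t ∩ f ⁻¹' Set.Ici Vm := by
      ext r; simp [hS, Set.mem_setOf_eq, and_comm]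
    rw [this]
    exact (hcont.mono hsubT).preimage_isClosed_of_isClosed isClosed_Icc isClosed_Ici
  have h0S : (0:ℝ) ∈ S := ⟨⟨le_rfl, ht.1⟩, hv0⟩
  have hSne : S.Nonempty := ⟨0, h0S⟩
  have hSbdd : BddAbove S := ⟨t, fun r hr => hr.1.2⟩
  set s := sSup S with hs
  have hsS : s ∈ S := hScl.csSup_mem hSne hSbdd
  have hsle : s ≤ t := csSup_le hSne fun r hr => hr.1.2
  have hslt : s < t := lt_of_le_of_ne hsle (fun h => absurd hsS.2 (by rw [h]; exact not_le.2 hlt))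
  have hs0 : 0 ≤ s := le_csSup hSbdd h0S
  -- on (s,t), f < Vm, hence derivative nonneg
  have hmono : MonotoneOn f (Set.Icc s t) := by
    apply monotoneOn_of_deriv_nonneg (convex_Icc s t)
    · exact hcont.mono (Set.Icc_subset_Icc hs0 (ht.2))
    · intro r hr
      rw [interior_Icc] at hr
      have hrT : r ∈ Set.Icc (0:ℝ) T :=
        ⟨le_of_lt (lt_of_le_of_lt hs0 hr.1), le_trans (le_of_lt hr.2) ht.2⟩
      exact ((hode r hrT).differentiableAt).differentiableWithinAt
    · intro r hr
      rw [interior_Icc] at hr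
      have hrT : r ∈ Set.Icc (0:ℝ) T :=
        ⟨le_of_lt (lt_of_le_of_lt hs0 hr.1), le_trans (le_of_lt hr.2) ht.2⟩
      have hfr : f r < Vm := by
        by_contra hge
        push_neg at hge
        have : r ∈ S := ⟨⟨hrT.1, le_of_lt hr.2⟩, hge⟩
        exact absurd (le_csSup hSbdd this) (not_le.2 hr.1)
      have hui : u r ≤ ρi (f r) := le_trans (hu r hrT) (hiVm ▸ hai (le_of_lt hfr))
      have hud : u r ≤ ρd (f r) := le_trans hui (hle _)
      rw [(hode r hrT).deriv]
      have h1 : max (u r - ρd (f r)) 0 = 0 := max_eq_right (by linarith)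
      have h2 : min (u r - ρi (f r)) 0 = u r - ρi (f r) := min_eq_left (by linarith)
      rw [h1, h2]
      have : 0 ≤ (1/τ) := by positivity
      nlinarith
  have := hmono (Set.left_mem_Icc.2 (le_of_lt hslt)) (Set.right_mem_Icc.2 (le_of_lt hslt)) (le_of_lt hslt)
  linarith [hsS.2]

/-- ODE-constraint lower barrier: if `v` satisfies
`∂_t v = Φ_τ(u,v)` a.e. in `Ω × (0,T)` with
`Φ_τ(u,v) = (1/τ)(-[u-ρ⁽ᵈ⁾(v)]₊ - [u-ρ⁽ⁱ⁾(v)]₋)`, where `ρ⁽ⁱ⁾, ρ⁽ᵈ⁾` are continuous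
non-increasing, `ρ⁽ⁱ⁾(V_m) = ρ⁽ᵈ⁾(V_m) = U_M`, `u ≤ U_M` a.e. and `v(·,0) ≥ V_m` a.e.,
then `v(·,t) ≥ V_m` a.e. in `Ω` for every `t ∈ [0,T]`. -/
theorem stmt11 {Ω : Type*} [MeasurableSpace Ω] (μ : Measure Ω)
    (T τ Vm UM : ℝ) (hT : 0 < T) (hτ : 0 < τ)
    (ρi ρd : ℝ → ℝ) (hci : Continuous ρi) (hcd : Continuous ρd)
    (hai : Antitone ρi) (had : Antitone ρd)
    (hiVm : ρi Vm = UM) (hdVm : ρd Vm = UM)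
    (hle : ∀ w, ρi w ≤ ρd w)
    (u v : Ω → ℝ → ℝ)
    (hode : ∀ᵐ x ∂μ, ∀ t ∈ Set.Icc (0:ℝ) T,
      HasDerivAt (v x)
        ((1/τ) * (-(max (u x t - ρd (v x t)) 0) - min (u x t - ρi (v x t)) 0)) t)
    (hu : ∀ᵐ x ∂μ, ∀ t ∈ Set.Icc (0:ℝ) T, u x t ≤ UM)
    (hv0 : ∀ᵐ x ∂μ, Vm ≤ v x 0) :
    ∀ t ∈ Set.Icc (0:ℝ) T, ∀ᵐ x ∂μ, Vm ≤ v x t := by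
  intro t ht
  filter_upwards [hode, hu, hv0] with x hx1 hx2 hx3
  exact stmt11_aux T τ Vm UM hτ ρi ρd hai hiVm hle (u x) (v x) hx1 hx2 hx3 t ht
end

section
/- Scalar invariant-region lemma: let Ψ₁, Ψ₂: ℝ² → ℝ be Lipschitz and non-increasing in each argument separately, and let u_l < u_r, v_l < v_r be reals satisfying Ψ₁(u_r, v_l) ≤ 0 ≤ Ψ₂(u_r, v_l) and Ψ₂(u_l, v_r) ≤ 0 ≤ Ψ₁(u_l, v_r). Let (u, v): [0,T] → ℝ² be a C¹ solution of the ODE system u' = Ψ₁(u,v), v' = Ψ₂(u,v) with u(0) ∈ [u_l, u_r] and v(0) ∈ [v_l, v_r]. Then u(t) ∈ [u_l, u_r] and v(t) ∈ [v_l, v_r] for all t ∈ [0,T]. -/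
/-!
Inflate the box by `E t = ε e^{(2K+1)t}`. On a face of the inflated box, say `u = u_r + E t`,
monotonicity compares `(u, v)` with the corner `(u_r, v_l)` shifted by at most `E t` in each
variable, so the corner condition and the Lipschitz bound give `u' ≤ 2K E t < E' t`: the
solution cannot cross the face. Continuous induction on `[0, T]` turns this into invariance of
the inflated box, and letting `ε → 0` gives the claim.
-/

open Real Set Filter Topology

theorem HasDerivWithinAt.eventually_neg_of_eq_zero {g : ℝ → ℝ} {g' x : ℝ}
    (hg : HasDerivWithinAt g g' (Ici x) x) (hx : g x = 0) (hg' : g' < 0) :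
    ∀ᶠ z in 𝓝[>] x, g z < 0 := by
  filter_upwards [hg.Ioi_of_Ici.limsup_slope_le' (lt_irrefl x) hg', self_mem_nhdsWithin]
    with z hslope hxz
  rw [slope_def_field, hx, sub_zero] at hslope
  simpa [div_lt_iff₀ (sub_pos.2 (mem_Ioi.1 hxz))] using hslope

theorem nonpos_of_hasDerivWithinAt_neg_on_boundary {ι : Type*} [Finite ι] {g g' : ι → ℝ → ℝ}
    {a b : ℝ} (hcont : ∀ i, ContinuousOn (g i) (Icc a b))
    (hderiv : ∀ i, ∀ t ∈ Ico a b, HasDerivWithinAt (g i) (g' i t) (Ici t) t)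
    (ha : ∀ i, g i a ≤ 0)
    (hboundary : ∀ t ∈ Ico a b, (∀ j, g j t ≤ 0) → ∀ i, g i t = 0 → g' i t < 0) :
    ∀ t ∈ Icc a b, ∀ i, g i t ≤ 0 := by
  set s := {t | ∀ i, g i t ≤ 0}
  have hclosed : IsClosed (s ∩ Icc a b) := by
    have hpi : IsClosed (univ.pi fun _ : ι => Iic (0 : ℝ)) :=
      isClosed_set_pi fun _ _ => isClosed_Iic
    convert (continuousOn_pi.2 hcont).preimage_isClosed_of_isClosed isClosed_Icc hpi using 1
    ext; simp [s, and_comm, Pi.le_def]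
  refine fun t ht => hclosed.Icc_subset_of_forall_mem_nhdsWithin ha (fun x ⟨hxs, hx⟩ => ?_) ht
  refine eventually_all.2 fun i => ?_
  rcases (hxs i).lt_or_eq with hlt | heq
  · exact ((hderiv i x hx).continuousWithinAt.mono Ioi_subset_Ici_self).eventually
      (eventually_le_nhds hlt)
  · exact (HasDerivWithinAt.eventually_neg_of_eq_zero (hderiv i x hx) heq
      (hboundary x hx hxs i heq)).mono fun _ => le_of_lt

theorem mem_Icc_of_forall_pos_mem_Icc_sub_add {x a b C : ℝ} (hC : 0 < C)
    (h : ∀ ε > 0, x ∈ Icc (a - ε * C) (b + ε * C)) : x ∈ Icc a b := by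
  refine ⟨le_of_forall_pos_le_add fun δ hδ => ?_, le_of_forall_pos_le_add fun δ hδ => ?_⟩ <;>
    have hδC := h (δ / C) (div_pos hδ hC) <;> rw [div_mul_cancel₀ δ hC.ne'] at hδC
  · linarith [hδC.1]
  · exact hδC.2

theorem le_add_of_antitone_of_lipschitz {Ψ : ℝ → ℝ → ℝ} {K : ℝ}
    (hlip : ∀ a b a' b' : ℝ, |Ψ a b - Ψ a' b'| ≤ K * (|a - a'| + |b - b'|))
    (hA : ∀ b, Antitone fun a => Ψ a b) (hB : ∀ a, Antitone (Ψ a))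
    {a b a₀ b₀ δ : ℝ} (hδ : 0 ≤ δ) (ha : a₀ - δ ≤ a) (hb : b₀ - δ ≤ b) :
    Ψ a b ≤ Ψ a₀ b₀ + 2 * K * δ := by
  have hlip₀ := (abs_le.1 (hlip (a₀ - δ) (b₀ - δ) a₀ b₀)).2
  rw [sub_sub_cancel_left, sub_sub_cancel_left, abs_neg, abs_of_nonneg hδ] at hlip₀
  calc Ψ a b ≤ Ψ (a₀ - δ) b := hA b ha
    _ ≤ Ψ (a₀ - δ) (b₀ - δ) := hB _ hb
    _ ≤ Ψ a₀ b₀ + 2 * K * δ := by linarith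

theorem sub_le_of_antitone_of_lipschitz {Ψ : ℝ → ℝ → ℝ} {K : ℝ}
    (hlip : ∀ a b a' b' : ℝ, |Ψ a b - Ψ a' b'| ≤ K * (|a - a'| + |b - b'|))
    (hA : ∀ b, Antitone fun a => Ψ a b) (hB : ∀ a, Antitone (Ψ a))
    {a b a₀ b₀ δ : ℝ} (hδ : 0 ≤ δ) (ha : a ≤ a₀ + δ) (hb : b ≤ b₀ + δ) :
    Ψ a₀ b₀ - 2 * K * δ ≤ Ψ a b := by
  have hlip₀ := (abs_le.1 (hlip (a₀ + δ) (b₀ + δ) a₀ b₀)).1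
  rw [add_sub_cancel_left, add_sub_cancel_left, abs_of_nonneg hδ] at hlip₀
  calc Ψ a₀ b₀ - 2 * K * δ ≤ Ψ (a₀ + δ) (b₀ + δ) := by linarith
    _ ≤ Ψ a (b₀ + δ) := hA _ ha
    _ ≤ Ψ a b := hB a hb

theorem drift_lt_on_faces {Ψ₁ Ψ₂ : ℝ → ℝ → ℝ} {K u_l u_r v_l v_r a b δ : ℝ}
    (hlip1 : ∀ a b a' b' : ℝ, |Ψ₁ a b - Ψ₁ a' b'| ≤ K * (|a - a'| + |b - b'|))
    (hlip2 : ∀ a b a' b' : ℝ, |Ψ₂ a b - Ψ₂ a' b'| ≤ K * (|a - a'| + |b - b'|))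
    (h1u : ∀ b, Antitone (fun a => Ψ₁ a b)) (h1v : ∀ a, Antitone (Ψ₁ a))
    (h2u : ∀ b, Antitone (fun a => Ψ₂ a b)) (h2v : ∀ a, Antitone (Ψ₂ a))
    (hs1 : Ψ₁ u_r v_l ≤ 0) (hs2 : 0 ≤ Ψ₂ u_r v_l)
    (hs3 : Ψ₂ u_l v_r ≤ 0) (hs4 : 0 ≤ Ψ₁ u_l v_r) (hδ : 0 < δ)
    (ha : a ∈ Icc (u_l - δ) (u_r + δ)) (hb : b ∈ Icc (v_l - δ) (v_r + δ)) :
    (a = u_l - δ → -((2 * K + 1) * δ) < Ψ₁ a b) ∧ (a = u_r + δ → Ψ₁ a b < (2 * K + 1) * δ) ∧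
    (b = v_l - δ → -((2 * K + 1) * δ) < Ψ₂ a b) ∧ (b = v_r + δ → Ψ₂ a b < (2 * K + 1) * δ) := by
  refine ⟨fun h => ?_, fun h => ?_, fun h => ?_, fun h => ?_⟩
  · have := sub_le_of_antitone_of_lipschitz hlip1 h1u h1v hδ.le (h.trans_le (by linarith)) hb.2
    linarith
  · have := le_add_of_antitone_of_lipschitz hlip1 h1u h1v (a := a) hδ.le (by linarith) hb.1
    linarith
  · have := sub_le_of_antitone_of_lipschitz hlip2 h2u h2v hδ.le ha.2 (h.trans_le (by linarith))
    linarith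
  · have := le_add_of_antitone_of_lipschitz hlip2 h2u h2v (b := b) hδ.le ha.1 (by linarith)
    linarith

theorem mem_expanding_box {Ψ₁ Ψ₂ : ℝ → ℝ → ℝ} {K T u_l u_r v_l v_r : ℝ} {u v : ℝ → ℝ}
    (hlip1 : ∀ a b a' b' : ℝ, |Ψ₁ a b - Ψ₁ a' b'| ≤ K * (|a - a'| + |b - b'|))
    (hlip2 : ∀ a b a' b' : ℝ, |Ψ₂ a b - Ψ₂ a' b'| ≤ K * (|a - a'| + |b - b'|))
    (h1u : ∀ b, Antitone (fun a => Ψ₁ a b)) (h1v : ∀ a, Antitone (Ψ₁ a))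
    (h2u : ∀ b, Antitone (fun a => Ψ₂ a b)) (h2v : ∀ a, Antitone (Ψ₂ a))
    (hs1 : Ψ₁ u_r v_l ≤ 0) (hs2 : 0 ≤ Ψ₂ u_r v_l)
    (hs3 : Ψ₂ u_l v_r ≤ 0) (hs4 : 0 ≤ Ψ₁ u_l v_r)
    (hu : ∀ t ∈ Icc 0 T, HasDerivAt u (Ψ₁ (u t) (v t)) t)
    (hv : ∀ t ∈ Icc 0 T, HasDerivAt v (Ψ₂ (u t) (v t)) t)
    (hu0 : u 0 ∈ Icc u_l u_r) (hv0 : v 0 ∈ Icc v_l v_r) {ε : ℝ} (hε : 0 < ε) :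
    ∀ t ∈ Icc 0 T,
      u t ∈ Icc (u_l - ε * exp ((2 * K + 1) * t)) (u_r + ε * exp ((2 * K + 1) * t)) ∧
      v t ∈ Icc (v_l - ε * exp ((2 * K + 1) * t)) (v_r + ε * exp ((2 * K + 1) * t)) := by
  set c := 2 * K + 1
  set E : ℝ → ℝ := fun t => ε * exp (c * t)
  have hE : ∀ t, HasDerivAt E (c * E t) t := fun t => by
    simpa [E, mul_comm, mul_left_comm] using ((hasDerivAt_mul_const c).exp).const_mul ε
  have hE_pos : ∀ t, 0 < E t := fun t => by positivity
  set g : Fin 4 → ℝ → ℝ :=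
    ![fun t => u_l - E t - u t, fun t => u t - (u_r + E t),
      fun t => v_l - E t - v t, fun t => v t - (v_r + E t)]
  set g' : Fin 4 → ℝ → ℝ :=
    ![fun t => -(c * E t) - Ψ₁ (u t) (v t), fun t => Ψ₁ (u t) (v t) - c * E t,
      fun t => -(c * E t) - Ψ₂ (u t) (v t), fun t => Ψ₂ (u t) (v t) - c * E t]
  have hg_iff : ∀ t, (∀ i, g i t ≤ 0) ↔
      u t ∈ Icc (u_l - E t) (u_r + E t) ∧ v t ∈ Icc (v_l - E t) (v_r + E t) := fun t => by
    simp [g, Fin.forall_fin_succ, and_assoc]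
  have hg : ∀ i, ∀ t ∈ Icc 0 T, HasDerivAt (g i) (g' i t) t := by
    intro i t ht
    fin_cases i
    · exact ((hasDerivAt_const t u_l).sub (hE t)).sub (hu t ht) |>.congr_deriv (by simp [g'])
    · exact (hu t ht).sub ((hasDerivAt_const t u_r).add (hE t)) |>.congr_deriv (by simp [g'])
    · exact ((hasDerivAt_const t v_l).sub (hE t)).sub (hv t ht) |>.congr_deriv (by simp [g'])
    · exact (hv t ht).sub ((hasDerivAt_const t v_r).add (hE t)) |>.congr_deriv (by simp [g'])
  have hboundary : ∀ t ∈ Ico 0 T, (∀ j, g j t ≤ 0) → ∀ i, g i t = 0 → g' i t < 0 := by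
    intro t _ hle i hi
    obtain ⟨hu_box, hv_box⟩ := (hg_iff t).1 hle
    obtain ⟨hu_l, hu_r, hv_l, hv_r⟩ := drift_lt_on_faces hlip1 hlip2 h1u h1v h2u h2v
      hs1 hs2 hs3 hs4 (hE_pos t) hu_box hv_box
    match i with
    | 0 =>
      have hi : u_l - E t - u t = 0 := hi
      show -(c * E t) - Ψ₁ (u t) (v t) < 0
      linarith [hu_l (by linarith)]
    | 1 =>
      have hi : u t - (u_r + E t) = 0 := hi
      show Ψ₁ (u t) (v t) - c * E t < 0
      linarith [hu_r (by linarith)]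
    | 2 =>
      have hi : v_l - E t - v t = 0 := hi
      show -(c * E t) - Ψ₂ (u t) (v t) < 0
      linarith [hv_l (by linarith)]
    | 3 =>
      have hi : v t - (v_r + E t) = 0 := hi
      show Ψ₂ (u t) (v t) - c * E t < 0
      linarith [hv_r (by linarith)]
  have hg0 : ∀ i, g i 0 ≤ 0 := by
    have := hE_pos 0
    refine (hg_iff 0).2 ⟨⟨?_, ?_⟩, ?_, ?_⟩ <;> linarith [hu0.1, hu0.2, hv0.1, hv0.2]
  intro t ht
  exact (hg_iff t).1 <| nonpos_of_hasDerivWithinAt_neg_on_boundary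
    (fun i s hs => (hg i s hs).continuousAt.continuousWithinAt)
    (fun i s hs => (hg i s (Ico_subset_Icc_self hs)).hasDerivWithinAt) hg0 hboundary t ht

theorem stmt12_general (T : ℝ) (Ψ₁ Ψ₂ : ℝ → ℝ → ℝ) (K : ℝ)
    (hlip1 : ∀ a b a' b' : ℝ, |Ψ₁ a b - Ψ₁ a' b'| ≤ K * (|a - a'| + |b - b'|))
    (hlip2 : ∀ a b a' b' : ℝ, |Ψ₂ a b - Ψ₂ a' b'| ≤ K * (|a - a'| + |b - b'|))
    (h1u : ∀ b, Antitone (fun a => Ψ₁ a b)) (h1v : ∀ a, Antitone (Ψ₁ a))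
    (h2u : ∀ b, Antitone (fun a => Ψ₂ a b)) (h2v : ∀ a, Antitone (Ψ₂ a))
    (u_l u_r v_l v_r : ℝ)
    (hs1 : Ψ₁ u_r v_l ≤ 0) (hs2 : 0 ≤ Ψ₂ u_r v_l)
    (hs3 : Ψ₂ u_l v_r ≤ 0) (hs4 : 0 ≤ Ψ₁ u_l v_r)
    (u v : ℝ → ℝ)
    (hu : ∀ t ∈ Set.Icc (0:ℝ) T, HasDerivAt u (Ψ₁ (u t) (v t)) t)
    (hv : ∀ t ∈ Set.Icc (0:ℝ) T, HasDerivAt v (Ψ₂ (u t) (v t)) t)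
    (hu0 : u 0 ∈ Set.Icc u_l u_r) (hv0 : v 0 ∈ Set.Icc v_l v_r) :
    ∀ t ∈ Set.Icc (0:ℝ) T, u t ∈ Set.Icc u_l u_r ∧ v t ∈ Set.Icc v_l v_r := by
  intro t ht
  have hbox := fun ε (hε : 0 < ε) => mem_expanding_box hlip1 hlip2 h1u h1v h2u h2v
    hs1 hs2 hs3 hs4 hu hv hu0 hv0 hε t ht
  exact ⟨mem_Icc_of_forall_pos_mem_Icc_sub_add (exp_pos _) fun ε hε => (hbox ε hε).1,
    mem_Icc_of_forall_pos_mem_Icc_sub_add (exp_pos _) fun ε hε => (hbox ε hε).2⟩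

/-- Scalar invariant-region lemma: if `Ψ₁, Ψ₂ : ℝ² → ℝ` are Lipschitz
and non-increasing in each argument separately, `u_l < u_r`, `v_l < v_r`,
`Ψ₁(u_r,v_l) ≤ 0 ≤ Ψ₂(u_r,v_l)` and `Ψ₂(u_l,v_r) ≤ 0 ≤ Ψ₁(u_l,v_r)`, then any C¹
solution of `u' = Ψ₁(u,v)`, `v' = Ψ₂(u,v)` on `[0,T]` with `u(0) ∈ [u_l,u_r]`,
`v(0) ∈ [v_l,v_r]` satisfies `u(t) ∈ [u_l,u_r]` and `v(t) ∈ [v_l,v_r]` on `[0,T]`. -/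
theorem stmt12 (T : ℝ) (hT : 0 ≤ T) (Ψ₁ Ψ₂ : ℝ → ℝ → ℝ) (K : ℝ)
    (hlip1 : ∀ a b a' b' : ℝ, |Ψ₁ a b - Ψ₁ a' b'| ≤ K * (|a - a'| + |b - b'|))
    (hlip2 : ∀ a b a' b' : ℝ, |Ψ₂ a b - Ψ₂ a' b'| ≤ K * (|a - a'| + |b - b'|))
    (h1u : ∀ b, Antitone (fun a => Ψ₁ a b)) (h1v : ∀ a, Antitone (Ψ₁ a))
    (h2u : ∀ b, Antitone (fun a => Ψ₂ a b)) (h2v : ∀ a, Antitone (Ψ₂ a))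
    (u_l u_r v_l v_r : ℝ) (hu_lr : u_l < u_r) (hv_lr : v_l < v_r)
    (hs1 : Ψ₁ u_r v_l ≤ 0) (hs2 : 0 ≤ Ψ₂ u_r v_l)
    (hs3 : Ψ₂ u_l v_r ≤ 0) (hs4 : 0 ≤ Ψ₁ u_l v_r)
    (u v : ℝ → ℝ)
    (hu : ∀ t ∈ Set.Icc (0:ℝ) T, HasDerivAt u (Ψ₁ (u t) (v t)) t)
    (hv : ∀ t ∈ Set.Icc (0:ℝ) T, HasDerivAt v (Ψ₂ (u t) (v t)) t)
    (hu0 : u 0 ∈ Set.Icc u_l u_r) (hv0 : v 0 ∈ Set.Icc v_l v_r) :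
    ∀ t ∈ Set.Icc (0:ℝ) T, u t ∈ Set.Icc u_l u_r ∧ v t ∈ Set.Icc v_l v_r :=
  stmt12_general T Ψ₁ Ψ₂ K hlip1 hlip2 h1u h1v h2u h2v u_l u_r v_l v_r hs1 hs2 hs3 hs4 u v hu hv hu0
    hv0
end

section
/- Regularised b approximation: let b ∈ C¹(ℝ) with 0 < b'(p) ≤ b_M for all p and b'(p) → 0 as p → ±∞. For δ > 0 small, let p_l^δ < p_r^δ be such that b'(p_l^δ) = b'(p_r^δ) = δ and b' > δ on (p_l^δ, p_r^δ), and define b_δ ∈ C¹(ℝ) by b_δ = b on [p_l^δ, p_r^δ], b_δ'(p) = δ for p ≤ p_l^δ and p ≥ p_r^δ (with b_δ continuous). Then b_δ' ≥ δ everywhere, b_δ' ≤ b_M, and there exists C > 0 (independent of δ and p) with |b_δ(p) − b(p)| ≤ C δ (|p| + 1) for all p ∈ ℝ. -/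
open Filter Set

/-! On `[pl, pr]` the two functions agree. Outside, `bδ - b` vanishes at the nearer endpoint
and has derivative `δ - b'`, which lies in `[0, δ]` because `0 < b' ≤ δ` there; the mean value
theorem then gives `|bδ p - b p| ≤ δ |p - endpoint| ≤ δ |p|`, so `C = 1` works. -/

theorem abs_sub_le_of_abs_deriv_sub_le {f g : ℝ → ℝ} {s : Set ℝ} {C a p : ℝ} (hs : Convex ℝ s)
    (hf : ∀ x ∈ s, DifferentiableAt ℝ f x) (hg : ∀ x ∈ s, DifferentiableAt ℝ g x)
    (hbound : ∀ x ∈ s, |deriv f x - deriv g x| ≤ C) (ha : a ∈ s) (hp : p ∈ s)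
    (hfga : f a = g a) : |f p - g p| ≤ C * |p - a| := by
  have hderiv : ∀ x ∈ s, deriv (fun t ↦ f t - g t) x = deriv f x - deriv g x :=
    fun x hx ↦ deriv_sub (hf x hx) (hg x hx)
  have key := hs.norm_image_sub_le_of_norm_deriv_le
    (fun x hx ↦ (hf x hx).sub (hg x hx)) (fun x hx ↦ (hderiv x hx).symm ▸ hbound x hx) ha hp
  simpa only [Pi.sub_apply, hfga, sub_self, sub_zero, Real.norm_eq_abs] using key

theorem abs_sub_le_of_deriv_eq_of_deriv_mem_Icc {f g : ℝ → ℝ} {s : Set ℝ} {δ a p : ℝ}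
    (hs : Convex ℝ s) (hf : Differentiable ℝ f) (hg : Differentiable ℝ g)
    (hfs : ∀ x ∈ s, deriv f x = δ) (hgs : ∀ x ∈ s, deriv g x ∈ Icc 0 δ) (ha : a ∈ s)
    (hp : p ∈ s) (hfga : f a = g a) : |f p - g p| ≤ δ * |p - a| := by
  refine abs_sub_le_of_abs_deriv_sub_le hs (fun x _ ↦ hf x) (fun x _ ↦ hg x) (fun x hx ↦ ?_)
    ha hp hfga
  obtain ⟨hg0, hgδ⟩ := hgs x hx
  rw [hfs x hx]
  exact abs_sub_le_of_nonneg_of_le (hg0.trans hgδ) le_rfl hg0 hgδ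

theorem deriv_eq_or_of_eqOn_Icc {f g : ℝ → ℝ} {a b c : ℝ} (hfg : EqOn f g (Icc a b))
    (hout : ∀ x, x ≤ a ∨ b ≤ x → deriv f x = c) (x : ℝ) :
    deriv f x = c ∨ (x ∈ Ioo a b ∧ deriv f x = deriv g x) := by
  by_cases hx : x ∈ Ioo a b
  · exact .inr ⟨hx, (hfg.mono Ioo_subset_Icc_self).deriv isOpen_Ioo hx⟩
  · rw [mem_Ioo, not_and_or, not_lt, not_lt] at hx
    exact .inl (hout x hx)

theorem stmt17_general (b : ℝ → ℝ) (bM : ℝ)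
    (hb : ContDiff ℝ 1 b)
    (hb' : ∀ p, 0 < deriv b p ∧ deriv b p ≤ bM) :
    ∃ C : ℝ, 0 < C ∧
      ∀ (δ pl pr : ℝ) (bδ : ℝ → ℝ), 0 < δ → pl < 0 → 0 < pr →
        deriv b pl = δ → deriv b pr = δ →
        (∀ p ∈ Set.Ioo pl pr, δ < deriv b p) →
        (∀ p : ℝ, p ≤ pl ∨ pr ≤ p → deriv b p ≤ δ) →
        ContDiff ℝ 1 bδ →
        (∀ p ∈ Set.Icc pl pr, bδ p = b p) →
        (∀ p : ℝ, p ≤ pl ∨ pr ≤ p → deriv bδ p = δ) →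
        (∀ p : ℝ, δ ≤ deriv bδ p) ∧
        (∀ p : ℝ, deriv bδ p ≤ bM) ∧
        (∀ p : ℝ, |bδ p - b p| ≤ C * δ * (|p| + 1)) := by
  refine ⟨1, one_pos, fun δ pl pr bδ hδ hpl hpr hdl _ hmid hout hbδ heq hδout ↦ ?_⟩
  have hderiv := deriv_eq_or_of_eqOn_Icc heq hδout
  have hδbM : δ ≤ bM := hdl ▸ (hb' pl).2
  have hdb : Differentiable ℝ b := hb.differentiable one_ne_zero
  have hdbδ : Differentiable ℝ bδ := hbδ.differentiable one_ne_zero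
  have hb_mem : ∀ x, x ≤ pl ∨ pr ≤ x → deriv b x ∈ Icc 0 δ :=
    fun x hx ↦ ⟨(hb' x).1.le, hout x hx⟩
  refine ⟨fun p ↦ ?_, fun p ↦ ?_, fun p ↦ ?_⟩
  · exact (hderiv p).elim (·.ge) fun ⟨hp, h⟩ ↦ h ▸ (hmid p hp).le
  · exact (hderiv p).elim (· ▸ hδbM) fun ⟨_, h⟩ ↦ h ▸ (hb' p).2
  suffices |bδ p - b p| ≤ δ * |p| by nlinarith [abs_nonneg p]
  rcases le_or_gt p pl with hp | hp
  · calc |bδ p - b p| ≤ δ * |p - pl| :=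
          abs_sub_le_of_deriv_eq_of_deriv_mem_Icc (convex_Iic pl) hdbδ hdb
            (fun x hx ↦ hδout x (.inl hx)) (fun x hx ↦ hb_mem x (.inl hx)) self_mem_Iic hp
            (heq pl ⟨le_rfl, (hpl.trans hpr).le⟩)
      _ ≤ δ * |p| := mul_le_mul_of_nonneg_left (by
          simpa using abs_sub_right_of_mem_uIcc (mem_uIcc.2 (.inr ⟨hp, hpl.le⟩) : pl ∈ uIcc 0 p))
          hδ.le
  rcases le_or_gt p pr with hp' | hp'
  · simp only [heq p ⟨hp.le, hp'⟩, sub_self, abs_zero]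
    positivity
  · calc |bδ p - b p| ≤ δ * |p - pr| :=
          abs_sub_le_of_deriv_eq_of_deriv_mem_Icc (convex_Ici pr) hdbδ hdb
            (fun x hx ↦ hδout x (.inr hx)) (fun x hx ↦ hb_mem x (.inr hx)) self_mem_Ici hp'.le
            (heq pr ⟨(hpl.trans hpr).le, le_rfl⟩)
      _ ≤ δ * |p| := mul_le_mul_of_nonneg_left (by
          simpa using abs_sub_right_of_mem_uIcc (mem_uIcc.2 (.inl ⟨hpr.le, hp'.le⟩) : pr ∈ uIcc 0 p))
          hδ.le

/-- Regularised `b` approximation: let `b ∈ C¹(ℝ)` with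
`0 < b' ≤ b_M` and `b'(p) → 0` as `p → ±∞`. For small `δ > 0` let
`p_l^δ < 0 < p_r^δ` with `b' = δ` at both points, `b' > δ` strictly between them
(and `b' ≤ δ` outside), and let `b_δ ∈ C¹(ℝ)` agree with `b` on `[p_l^δ, p_r^δ]`
and have `b_δ' = δ` outside. Then `b_δ' ≥ δ` everywhere, `b_δ' ≤ b_M`, and there is
a constant `C > 0`, independent of `δ` and `p`, with
`|b_δ(p) − b(p)| ≤ C δ (|p| + 1)` for all `p`. -/
theorem stmt17 (b : ℝ → ℝ) (bM : ℝ)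
    (hb : ContDiff ℝ 1 b)
    (hb' : ∀ p, 0 < deriv b p ∧ deriv b p ≤ bM)
    (hbtop : Tendsto (deriv b) atTop (nhds 0))
    (hbbot : Tendsto (deriv b) atBot (nhds 0)) :
    ∃ C : ℝ, 0 < C ∧
      ∀ (δ pl pr : ℝ) (bδ : ℝ → ℝ), 0 < δ → pl < 0 → 0 < pr →
        deriv b pl = δ → deriv b pr = δ →
        (∀ p ∈ Set.Ioo pl pr, δ < deriv b p) →
        (∀ p : ℝ, p ≤ pl ∨ pr ≤ p → deriv b p ≤ δ) →
        ContDiff ℝ 1 bδ →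
        (∀ p ∈ Set.Icc pl pr, bδ p = b p) →
        (∀ p : ℝ, p ≤ pl ∨ pr ≤ p → deriv bδ p = δ) →
        (∀ p : ℝ, δ ≤ deriv bδ p) ∧
        (∀ p : ℝ, deriv bδ p ≤ bM) ∧
        (∀ p : ℝ, |bδ p - b p| ≤ C * δ * (|p| + 1)) :=
  stmt17_general b bM hb hb'
end
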